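/- Define φ(0,k)=1 and φ(k,k)=(-1)^k for all k≥0, and for k>l>0, φ(l,k)=(-1)^{k-l+1}·φ(l-1,k-1)+φ(l,k-1). Then for all k≥1, φ(1,2k)=0. -/
import Mathlib


theorem stmt (φ : ℕ → ℕ → ℤ)
    (h0 : ∀ k : ℕ, φ 0 k = 1)
    (hdiag : ∀ k : ℕ, φ k k = (-1 : ℤ) ^ k)
    (hrec : ∀ l k : ℕ, 0 < l → l < k →
      φ l k = (-1 : ℤ) ^ (k - l + 1) * φ (l - 1) (k - 1) + φ l (k - 1)) :
    ∀ k : ℕ, 1 ≤ k → φ 1 (2 * k) = 0 := by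
  have key : ∀ k : ℕ, 1 ≤ k → φ 1 (2 * k) = 0 ∧ φ 1 (2 * k + 1) = -1 := by
    intro k hk
    induction k with
    | zero => omega
    | succ n ih =>
      rcases Nat.eq_or_lt_of_le hk with h | h
      · -- n = 0, k = 1
        have hn : n = 0 := by omega
        subst hn
        have h2 : φ 1 2 = (-1 : ℤ) ^ (2 - 1 + 1) * φ 0 1 + φ 1 1 := hrec 1 2 (by omega) (by omega)
        have h3 : φ 1 3 = (-1 : ℤ) ^ (3 - 1 + 1) * φ 0 2 + φ 1 2 := hrec 1 3 (by omega) (by omega)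
        simp [h0, hdiag] at h2 h3
        norm_num at h2 h3 ⊢
        constructor
        · omega
        · omega
      · have hn : 1 ≤ n := by omega
        obtain ⟨ih0, ih1⟩ := ih hn
        have h2 : φ 1 (2 * (n + 1)) = (-1 : ℤ) ^ (2 * (n + 1) - 1 + 1) * φ 0 (2 * (n + 1) - 1) + φ 1 (2 * (n + 1) - 1) :=
          hrec 1 (2 * (n + 1)) (by omega) (by omega)
        have e1 : 2 * (n + 1) - 1 = 2 * n + 1 := by omega
        rw [e1] at h2
        rw [h0] at h2
        have hpow : (-1 : ℤ) ^ (2 * n + 1 + 1) = 1 := by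
          rw [show 2 * n + 1 + 1 = 2 * (n + 1) from by omega]
          simp [pow_mul]
        rw [hpow, ih1] at h2
        have h20 : φ 1 (2 * (n + 1)) = 0 := by rw [h2]; ring
        refine ⟨h20, ?_⟩
        have h3 : φ 1 (2 * (n + 1) + 1) = (-1 : ℤ) ^ (2 * (n + 1) + 1 - 1 + 1) * φ 0 (2 * (n + 1) + 1 - 1) + φ 1 (2 * (n + 1) + 1 - 1) :=
          hrec 1 (2 * (n + 1) + 1) (by omega) (by omega)
        have e2 : 2 * (n + 1) + 1 - 1 = 2 * (n + 1) := by omega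
        rw [e2] at h3
        have hpow2 : (-1 : ℤ) ^ (2 * (n + 1) + 1) = -1 := by
          simp [pow_succ, pow_mul]
        rw [hpow2, h0, h20] at h3
        rw [h3]; ring
  exact fun k hk => (key k hk).1
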